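/- arXiv:1404.3882 — 4 statements merged into one kernel-verified Lean document; each statement's English description precedes it below -/
import Mathlib

section
/- Let G = (V,E) be a finite simple graph, let W be a vertex cover of G, and let S be a minimal separator of G. Let (D_1, S, D_2) be a partition of V such that D_1 and D_2 are each a union of connected components of G − S, and such that D_1 and D_2 each contain a full component associated to S. Write D_1^W = D_1 ∩ W and D_2^W = D_2 ∩ W. Then S \ W = { x ∈ V \ W : N(x) intersects D_1^W and N(x) intersects D_2^W }. -/
open SimpleGraph

universe u

/-- Reachability in `G − S`: there is a walk whose support avoids `S`. -/
def AvoidReach {V : Type u} (G : SimpleGraph V) (S : Set V) (u v : V) : Prop :=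
  ∃ w : G.Walk u v, ∀ x ∈ w.support, x ∉ S

/-- `S` is a `u,v`-separator of `G`: `u, v ∉ S` and `u,v` lie in different
connected components of `G − S`. -/
def IsSep {V : Type u} (G : SimpleGraph V) (S : Set V) (u v : V) : Prop :=
  u ∉ S ∧ v ∉ S ∧ ¬ AvoidReach G S u v

/-- `S` is a minimal `u,v`-separator of `G`. -/
def IsMinSep {V : Type u} (G : SimpleGraph V) (S : Set V) (u v : V) : Prop :=
  IsSep G S u v ∧ ∀ T ⊂ S, ¬ IsSep G T u v

/-- `S` is a minimal separator of `G`. -/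
def IsMinimalSeparator {V : Type u} (G : SimpleGraph V) (S : Set V) : Prop :=
  ∃ u v, IsMinSep G S u v

/-- `C` is a connected component of `G − S`. -/
def IsCompOf {V : Type u} (G : SimpleGraph V) (S C : Set V) : Prop :=
  ∃ v, v ∉ S ∧ C = {x | AvoidReach G S v x}

/-- The neighbourhood of a vertex set `A`: vertices outside `A` with a neighbour in `A`. -/
def setNbhd {V : Type u} (G : SimpleGraph V) (A : Set V) : Set V :=
  {x | x ∉ A ∧ ∃ a ∈ A, G.Adj x a}

/-- `C` is a full component of `G − S` associated to `S`, i.e. `N(C) = S`. -/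
def IsFullCompOf {V : Type u} (G : SimpleGraph V) (S C : Set V) : Prop :=
  IsCompOf G S C ∧ setNbhd G C = S

/-- `W` is a vertex cover of `G`. -/
def IsVC {V : Type u} (G : SimpleGraph V) (W : Set V) : Prop :=
  ∀ ⦃a b⦄, G.Adj a b → a ∈ W ∨ b ∈ W

/-- The vertex cover number `vc(G)`. -/
noncomputable def vcNum {V : Type u} (G : SimpleGraph V) : ℕ :=
  sInf {n | ∃ W : Set V, IsVC G W ∧ W.ncard = n}

/-- A graph is chordal if every cycle on four or more vertices has a chord, i.e. an
edge of the graph between two vertices of the cycle that is not an edge of the cycle. -/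
def IsChordalG {V : Type u} (G : SimpleGraph V) : Prop :=
  ∀ (v : V) (w : G.Walk v v), w.IsCycle → 4 ≤ w.length →
    ∃ x ∈ w.support, ∃ y ∈ w.support, G.Adj x y ∧ s(x, y) ∉ w.edges

/-- `H` is a minimal triangulation of `G`: a chordal supergraph of `G` such that no graph
strictly between `G` and `H` is chordal. -/
def IsMinimalTriangulation {V : Type u} (G H : SimpleGraph V) : Prop :=
  G ≤ H ∧ IsChordalG H ∧ ∀ F : SimpleGraph V, G ≤ F → F < H → ¬ IsChordalG F

/-- `Ω` is a maximal clique of `H`. -/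
def IsMaxClique {V : Type u} (H : SimpleGraph V) (Ω : Set V) : Prop :=
  H.IsClique Ω ∧ ∀ t : Set V, H.IsClique t → Ω ⊆ t → t = Ω

/-- `Ω` is a potential maximal clique of `G`: a maximal clique of some
minimal triangulation of `G`. -/
def IsPMC {V : Type u} (G : SimpleGraph V) (Ω : Set V) : Prop :=
  ∃ H : SimpleGraph V, IsMinimalTriangulation G H ∧ IsMaxClique H Ω

/-
A vertex outside `S` lies in `D₁` or `D₂`, and since these are unions of components of
`G − S`, all its neighbours outside `S` lie on the same side; so a vertex with neighbours in
both `D₁` and `D₂` must be in `S`. Conversely, a vertex `x ∈ S \ W` has a neighbour in each of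
the full components inside `D₁` and `D₂`, and these neighbours lie in `W` because `x ∉ W`.
-/

namespace IsVC

variable {V : Type u} {G : SimpleGraph V} {W : Set V}

theorem mem_of_adj_of_notMem (hW : IsVC G W) {x y : V} (hxy : G.Adj x y) (hx : x ∉ W) :
    y ∈ W :=
  (hW hxy).resolve_left hx

end IsVC

section Components

variable {V : Type u} {G : SimpleGraph V} {S : Set V}

theorem AvoidReach.concat {u x y : V} (h : AvoidReach G S u x) (hxy : G.Adj x y)
    (hy : y ∉ S) : AvoidReach G S u y := by
  obtain ⟨w, hw⟩ := h
  refine ⟨w.concat hxy, fun z hz => ?_⟩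
  rw [Walk.support_concat, List.mem_append, List.mem_singleton] at hz
  rcases hz with hz | rfl
  exacts [hw z hz, hy]

theorem IsCompOf.mem_of_adj {C : Set V} (hC : IsCompOf G S C) {x y : V} (hx : x ∈ C)
    (hxy : G.Adj x y) (hy : y ∉ S) : y ∈ C := by
  obtain ⟨v, -, rfl⟩ := hC
  exact AvoidReach.concat hx hxy hy

theorem mem_sUnion_of_adj {F : Set (Set V)} (hF : ∀ C ∈ F, IsCompOf G S C) {x y : V}
    (hx : x ∈ ⋃₀ F) (hxy : G.Adj x y) (hy : y ∉ S) : y ∈ ⋃₀ F := by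
  obtain ⟨C, hCF, hxC⟩ := hx
  exact ⟨C, hCF, (hF C hCF).mem_of_adj hxC hxy hy⟩

theorem IsFullCompOf.exists_adj_mem {C : Set V} (hC : IsFullCompOf G S C) {x : V}
    (hx : x ∈ S) : ∃ y ∈ C, G.Adj x y := by
  rw [← hC.2] at hx
  exact hx.2

theorem IsVC.exists_adj_mem_inter {W D : Set V} (hW : IsVC G W)
    (hD : ∃ C, IsFullCompOf G S C ∧ C ⊆ D) {x : V} (hxS : x ∈ S) (hxW : x ∉ W) :
    ∃ y ∈ D ∩ W, G.Adj x y := by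
  obtain ⟨C, hC, hCD⟩ := hD
  obtain ⟨y, hyC, hxy⟩ := hC.exists_adj_mem hxS
  exact ⟨y, ⟨hCD hyC, hW.mem_of_adj_of_notMem hxy hxW⟩, hxy⟩

end Components

theorem statement_0_general {V : Type} (G : SimpleGraph V) (W : Set V) (hW : IsVC G W)
    (S D1 D2 : Set V)
    (hcover : D1 ∪ S ∪ D2 = Set.univ)
    (h12 : Disjoint D1 D2) (h1S : Disjoint D1 S) (h2S : Disjoint D2 S)
    (hD1 : ∃ F : Set (Set V), (∀ C ∈ F, IsCompOf G S C) ∧ D1 = ⋃₀ F)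
    (hD2 : ∃ F : Set (Set V), (∀ C ∈ F, IsCompOf G S C) ∧ D2 = ⋃₀ F)
    (hfull1 : ∃ C, IsFullCompOf G S C ∧ C ⊆ D1)
    (hfull2 : ∃ C, IsFullCompOf G S C ∧ C ⊆ D2) :
    S \ W = {x | x ∉ W ∧ (∃ y ∈ D1 ∩ W, G.Adj x y) ∧ (∃ y ∈ D2 ∩ W, G.Adj x y)} := by
  ext x
  refine ⟨fun ⟨hxS, hxW⟩ =>
    ⟨hxW, hW.exists_adj_mem_inter hfull1 hxS hxW, hW.exists_adj_mem_inter hfull2 hxS hxW⟩, ?_⟩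
  rintro ⟨hxW, ⟨y1, ⟨hy1, -⟩, hxy1⟩, ⟨y2, ⟨hy2, -⟩, hxy2⟩⟩
  refine ⟨?_, hxW⟩
  have hx : x ∈ D1 ∪ S ∪ D2 := hcover ▸ Set.mem_univ x
  rcases hx with (hx | hxS) | hx
  · obtain ⟨F, hF, rfl⟩ := hD1
    have hy2S : y2 ∉ S := Set.disjoint_left.mp h2S hy2
    exact absurd hy2 (Set.disjoint_left.mp h12 (mem_sUnion_of_adj hF hx hxy2 hy2S))
  · exact hxS
  · obtain ⟨F, hF, rfl⟩ := hD2
    have hy1S : y1 ∉ S := Set.disjoint_left.mp h1S hy1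
    exact absurd (mem_sUnion_of_adj hF hx hxy1 hy1S) (Set.disjoint_left.mp h12 hy1)

theorem statement_0 {V : Type} [Fintype V] (G : SimpleGraph V) (W : Set V) (hW : IsVC G W)
    (S D1 D2 : Set V) (hS : IsMinimalSeparator G S)
    (hcover : D1 ∪ S ∪ D2 = Set.univ)
    (h12 : Disjoint D1 D2) (h1S : Disjoint D1 S) (h2S : Disjoint D2 S)
    (hD1 : ∃ F : Set (Set V), (∀ C ∈ F, IsCompOf G S C) ∧ D1 = ⋃₀ F)
    (hD2 : ∃ F : Set (Set V), (∀ C ∈ F, IsCompOf G S C) ∧ D2 = ⋃₀ F)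
    (hfull1 : ∃ C, IsFullCompOf G S C ∧ C ⊆ D1)
    (hfull2 : ∃ C, IsFullCompOf G S C ∧ C ⊆ D2) :
    S \ W = {x | x ∉ W ∧ (∃ y ∈ D1 ∩ W, G.Adj x y) ∧ (∃ y ∈ D2 ∩ W, G.Adj x y)} :=
  statement_0_general G W hW S D1 D2 hcover h12 h1S h2S hD1 hD2 hfull1 hfull2
end

section
/- Every finite simple graph G has at most 3^{vc(G)} minimal separators. -/
open SimpleGraph

universe u

/-!
Fix a vertex cover `W` and a minimal `u,v`-separator `S`, and label each vertex of `W` by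
whether it lies in `S`, in the component of `u` in `G − S`, or elsewhere. By minimality every
vertex of `S` has neighbours in the full components of both `u` and `v`; for a vertex outside `W`
these neighbours lie in `W`. Hence `S` is recovered from the labelling: it consists of the
`W`-vertices labelled as in `S` and the vertices adjacent to `W`-vertices of both other labels.
So there are at most `3 ^ |W|` minimal separators.
-/

section AvoidReach

variable {V : Type*} {G : SimpleGraph V} {S : Set V} {a b c : V}

lemma AvoidReach.right_notMem (h : AvoidReach G S a b) : b ∉ S :=
  h.elim fun w hw => hw b w.end_mem_support

lemma avoidReach_refl (ha : a ∉ S) : AvoidReach G S a a :=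
  ⟨.nil, by simpa using ha⟩

lemma AvoidReach.symm (h : AvoidReach G S a b) : AvoidReach G S b a := by
  obtain ⟨w, hw⟩ := h
  exact ⟨w.reverse, fun x hx => hw x (by simpa using hx)⟩

lemma AvoidReach.trans (h₁ : AvoidReach G S a b) (h₂ : AvoidReach G S b c) :
    AvoidReach G S a c := by
  obtain ⟨w₁, hw₁⟩ := h₁
  obtain ⟨w₂, hw₂⟩ := h₂
  refine ⟨w₁.append w₂, fun x hx => ?_⟩
  rcases (w₁.mem_support_append_iff w₂).mp hx with hx | hx
  exacts [hw₁ x hx, hw₂ x hx]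

lemma AvoidReach.snoc (h : AvoidReach G S a b) (hbc : G.Adj b c) (hc : c ∉ S) :
    AvoidReach G S a c :=
  h.trans ⟨.cons hbc .nil, by simp [h.right_notMem, hc]⟩

lemma AvoidReach.of_diff_singleton {s : V} (hs : ∀ y, G.Adj s y → ¬ AvoidReach G S a y)
    (h : AvoidReach G (S \ {s}) a b) (ha : a ∉ S) : AvoidReach G S a b := by
  suffices H : ∀ {c} (p : G.Walk c b), AvoidReach G S a c →
      (∀ x ∈ p.support, x ∉ S \ {s}) → AvoidReach G S a b from
    h.elim fun w hw => H w (avoidReach_refl ha) hw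
  clear h
  intro c p
  induction p with
  | nil => exact fun hc _ => hc
  | @cons c d b hcd p ih =>
    intro hc hp
    have hd : d ∉ S := by
      intro hdS
      obtain rfl : d = s := by_contra fun hds => hp d (by simp) ⟨hdS, hds⟩
      exact hs c hcd.symm hc
    exact ih (hc.snoc hcd hd) fun x hx => hp x (by simp [hx])

end AvoidReach

section MinimalSeparator

variable {V : Type*} {G : SimpleGraph V} {S : Set V} {u v : V}

lemma IsSep.symm (h : IsSep G S u v) : IsSep G S v u :=
  ⟨h.2.1, h.1, fun hr => h.2.2 hr.symm⟩

lemma IsMinSep.symm (h : IsMinSep G S u v) : IsMinSep G S v u :=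
  ⟨h.1.symm, fun T hT hsep => h.2 T hT hsep.symm⟩

lemma IsMinSep.exists_adj_avoidReach (h : IsMinSep G S u v) {s : V} (hs : s ∈ S) :
    ∃ y, G.Adj s y ∧ AvoidReach G S u y := by
  by_contra! hno
  have hsep : IsSep G (S \ {s}) u v :=
    ⟨fun hu => h.1.1 hu.1, fun hv => h.1.2.1 hv.1,
      fun hr => h.1.2.2 (hr.of_diff_singleton hno h.1.1)⟩
  exact h.2 _ (Set.sdiff_singleton_ssubset.mpr hs) hsep

noncomputable def sepLabel (G : SimpleGraph V) (S : Set V) (u x : V) : Fin 3 :=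
  open Classical in if x ∈ S then 0 else if AvoidReach G S u x then 1 else 2

lemma sepLabel_eq_zero {x : V} : sepLabel G S u x = 0 ↔ x ∈ S := by
  unfold sepLabel
  split_ifs <;> simp_all

lemma sepLabel_eq_one {x : V} : sepLabel G S u x = 1 ↔ AvoidReach G S u x := by
  unfold sepLabel
  split_ifs with hS
  · exact iff_of_false (by decide) fun hR => hR.right_notMem hS
  all_goals simp_all

lemma sepLabel_eq_two {x : V} : sepLabel G S u x = 2 ↔ x ∉ S ∧ ¬ AvoidReach G S u x := by
  unfold sepLabel
  split_ifs <;> simp_all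

def separatorOfLabeling (G : SimpleGraph V) (W : Set V) (ℓ : W → Fin 3) : Set V :=
  {x | (∃ hx : x ∈ W, ℓ ⟨x, hx⟩ = 0) ∨
    (∃ y : W, G.Adj x y ∧ ℓ y = 1) ∧ (∃ z : W, G.Adj x z ∧ ℓ z = 2)}

lemma IsMinSep.separatorOfLabeling_sepLabel {W : Set V} (hW : IsVC G W)
    (h : IsMinSep G S u v) :
    separatorOfLabeling G W (fun w => sepLabel G S u w) = S := by
  ext x
  simp only [separatorOfLabeling, Set.mem_ofPred_eq, sepLabel_eq_zero, sepLabel_eq_one,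
    sepLabel_eq_two]
  constructor
  · rintro (⟨-, hx⟩ | ⟨⟨y, hxy, hy⟩, ⟨z, hxz, hzS, hzu⟩⟩)
    · exact hx
    by_contra hx
    exact hzu ((hy.snoc hxy.symm hx).snoc hxz hzS)
  · intro hx
    by_cases hxW : x ∈ W
    · exact .inl ⟨hxW, hx⟩
    obtain ⟨y, hxy, hy⟩ := h.exists_adj_avoidReach hx
    obtain ⟨z, hxz, hz⟩ := h.symm.exists_adj_avoidReach hx
    have hzu : ¬ AvoidReach G S u z := fun huz => h.1.2.2 (huz.trans hz.symm)
    exact .inr ⟨⟨⟨y, (hW hxy).resolve_left hxW⟩, hxy, hy⟩,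
      ⟨⟨z, (hW hxz).resolve_left hxW⟩, hxz, hz.right_notMem, hzu⟩⟩

lemma setOf_isMinimalSeparator_subset_range {W : Set V} (hW : IsVC G W) :
    {S | IsMinimalSeparator G S} ⊆ Set.range (separatorOfLabeling G W) := by
  rintro S ⟨u, v, h⟩
  exact ⟨_, h.separatorOfLabeling_sepLabel hW⟩

lemma ncard_setOf_isMinimalSeparator_le [Finite V] {W : Set V} (hW : IsVC G W) :
    {S | IsMinimalSeparator G S}.ncard ≤ 3 ^ W.ncard :=
  calc {S | IsMinimalSeparator G S}.ncard
      ≤ (Set.range (separatorOfLabeling G W)).ncard :=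
        Set.ncard_le_ncard (setOf_isMinimalSeparator_subset_range hW) (Set.finite_range _)
    _ ≤ Nat.card (W → Fin 3) := Finite.card_range_le _
    _ = 3 ^ W.ncard := by simp [Nat.card_fun]

end MinimalSeparator

lemma exists_isVC_ncard_eq_vcNum {V : Type*} (G : SimpleGraph V) :
    ∃ W : Set V, IsVC G W ∧ W.ncard = vcNum G :=
  Nat.sInf_mem (s := {n | ∃ W : Set V, IsVC G W ∧ W.ncard = n})
    ⟨_, Set.univ, fun _ _ _ => Or.inl trivial, rfl⟩

theorem statement_1 {V : Type} [Fintype V] (G : SimpleGraph V) :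
    {S : Set V | IsMinimalSeparator G S}.ncard ≤ 3 ^ vcNum G := by
  obtain ⟨W, hW, hWcard⟩ := exists_isVC_ncard_eq_vcNum G
  exact hWcard ▸ ncard_setOf_isMinimalSeparator_le hW
end

section
/- Let H be obtained from a graph G with vertex set {v_1,…,v_k} by expanding each vertex v_i by a module M_i = (V_i, E_i). If S is a minimal y,z-separator of H for two vertices y, z ∈ V_i, then S ∩ V_i is a minimal separator of the graph M_i and S \ V_i = N_H(V_i). -/
open SimpleGraph

universe u

/-- The graph `H` obtained from `G` (with vertex set `{v_1, …, v_k} = Fin k`) by expanding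
each vertex `i` by the module `M i`: the vertex set is the disjoint union `Σ i, V i`;
within each `V i` the edges are those of `M i`, and `a ∈ V i` is adjacent to `b ∈ V j`
(`i ≠ j`) iff `i` and `j` are adjacent in `G`. -/
def expandG {k : ℕ} {V : Fin k → Type u} (G : SimpleGraph (Fin k))
    (M : ∀ i, SimpleGraph (V i)) : SimpleGraph (Σ i, V i) :=
  SimpleGraph.fromRel (fun a b =>
    (∃ h : a.1 = b.1, (M b.1).Adj (h ▸ a.2) b.2) ∨ (a.1 ≠ b.1 ∧ G.Adj a.1 b.1))

/-- The set of vertices of the expanded graph coming from the module `M i`,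
i.e. the copy of `V i`. -/
def modSet {k : ℕ} {V : Fin k → Type u} (i : Fin k) : Set (Σ i, V i) := {x | x.1 = i}

/-!
Every vertex outside `V i` adjacent to some vertex of `V i` is adjacent to all of `V i`,
so it lies on a path `y – a – z`; hence a `y,z`-separator `S` contains `N(V i)`. Once
`N(V i)` is deleted, walks starting in `V i` stay in `V i`, so for sets `T ⊇ N(V i)`,
separating `y, z` in `H` by `T` is the same as separating them in `M i` by `T ∩ V i`.
The separators `T' ∪ N(V i)` with `T' ⊆ V i` thus correspond monotonically to separators
`T'` of `M i`, and minimality of `S` transfers in both directions.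
-/

namespace AvoidReach

variable {W W' : Type u} {G : SimpleGraph W} {S : Set W} {a b c : W}

lemma refl (ha : a ∉ S) : AvoidReach G S a a :=
  ⟨Walk.nil, by simpa using ha⟩

lemma cons (hab : G.Adj a b) (ha : a ∉ S) : AvoidReach G S b c → AvoidReach G S a c := by
  rintro ⟨w, hw⟩
  refine ⟨Walk.cons hab w, fun x hx => ?_⟩
  rcases List.mem_cons.mp (Walk.support_cons hab w ▸ hx) with rfl | hx
  exacts [ha, hw x hx]

lemma map {G' : SimpleGraph W'} (f : G →g G') {S' : Set W'} :
    AvoidReach G (f ⁻¹' S') a b → AvoidReach G' S' (f a) (f b) := by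
  rintro ⟨w, hw⟩
  refine ⟨w.map f, fun x hx => ?_⟩
  obtain ⟨t, ht, rfl⟩ := List.mem_map.mp (Walk.support_map f w ▸ hx)
  exact hw t ht

end AvoidReach

section Expansion

variable {k : ℕ} {V : Fin k → Type u} {G : SimpleGraph (Fin k)} {M : ∀ i, SimpleGraph (V i)}
  {i : Fin k}

lemma expandG_adj_mk_mk {u w : V i} :
    (expandG G M).Adj ⟨i, u⟩ ⟨i, w⟩ ↔ (M i).Adj u w := by
  constructor
  · rintro ⟨-, (⟨_, hadj⟩ | ⟨h, -⟩) | (⟨_, hadj⟩ | ⟨h, -⟩)⟩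
    exacts [hadj, absurd rfl h, hadj.symm, absurd rfl h]
  · intro h
    exact ⟨fun he => h.ne (eq_of_heq (Sigma.mk.inj he).2), Or.inl (Or.inl ⟨rfl, h⟩)⟩

lemma expandG_adj_mk_of_fst_ne {a : Σ j, V j} (hne : a.1 ≠ i) (u : V i) :
    (expandG G M).Adj a ⟨i, u⟩ ↔ G.Adj a.1 i := by
  constructor
  · rintro ⟨-, (⟨h, -⟩ | ⟨-, hadj⟩) | (⟨h, -⟩ | ⟨-, hadj⟩)⟩
    exacts [absurd h hne, hadj, absurd h.symm hne, hadj.symm]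
  · exact fun h => ⟨fun he => hne (congrArg Sigma.fst he), Or.inl (Or.inr ⟨hne, h⟩)⟩

def moduleHom (G : SimpleGraph (Fin k)) (M : ∀ i, SimpleGraph (V i)) (i : Fin k) :
    M i →g expandG G M :=
  ⟨Sigma.mk i, expandG_adj_mk_mk.mpr⟩

lemma adj_mk_of_mem_setNbhd_modSet {a : Σ j, V j}
    (ha : a ∈ setNbhd (expandG G M) (modSet i)) (u : V i) : (expandG G M).Adj a ⟨i, u⟩ := by
  obtain ⟨haV, ⟨j, w⟩, rfl : j = i, hadj⟩ := ha
  exact (expandG_adj_mk_of_fst_ne haV u).mpr ((expandG_adj_mk_of_fst_ne haV w).mp hadj)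

lemma mk_notMem_setNbhd_modSet (u : V i) :
    (⟨i, u⟩ : Σ j, V j) ∉ setNbhd (expandG G M) (modSet i) :=
  fun h => h.1 rfl

lemma setNbhd_modSet_subset_of_isSep {S : Set (Σ j, V j)} {y z : V i}
    (hS : IsSep (expandG G M) S ⟨i, y⟩ ⟨i, z⟩) : setNbhd (expandG G M) (modSet i) ⊆ S := by
  obtain ⟨hyS, hzS, hyz⟩ := hS
  intro a ha
  by_contra haS
  exact hyz <| .cons (adj_mk_of_mem_setNbhd_modSet ha y).symm hyS <|
    .cons (adj_mk_of_mem_setNbhd_modSet ha z) haS (.refl hzS)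

/-- Once `N(V i)` is deleted, a walk starting in `V i` cannot leave `V i`. -/
lemma avoidReach_module_of_walk {T : Set (Σ j, V j)}
    (hT : setNbhd (expandG G M) (modSet i) ⊆ T) {a b : Σ j, V j} (w : (expandG G M).Walk a b) :
    ∀ ya yb : V i, a = ⟨i, ya⟩ → b = ⟨i, yb⟩ → (∀ x ∈ w.support, x ∉ T) →
      AvoidReach (M i) (Sigma.mk i ⁻¹' T) ya yb := by
  induction w with
  | nil =>
    rintro ya yb rfl hb hw
    obtain rfl : ya = yb := eq_of_heq (Sigma.mk.inj hb).2
    exact .refl (hw _ (by simp))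
  | @cons a v b hadj p ih =>
    rintro ya yb rfl hb hw
    obtain ⟨j, v⟩ := v
    have hvT : ⟨j, v⟩ ∉ T := hw _ (by simp)
    obtain rfl : j = i := by
      by_contra hji
      exact hvT (hT ⟨hji, _, rfl, hadj.symm⟩)
    exact .cons (expandG_adj_mk_mk.mp hadj) (hw _ (by simp))
      (ih v yb rfl hb fun x hx => hw x (by simp [hx]))

lemma avoidReach_expandG_mk_iff {T : Set (Σ j, V j)}
    (hT : setNbhd (expandG G M) (modSet i) ⊆ T) {y z : V i} :
    AvoidReach (expandG G M) T ⟨i, y⟩ ⟨i, z⟩ ↔ AvoidReach (M i) (Sigma.mk i ⁻¹' T) y z :=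
  ⟨fun ⟨w, hw⟩ => avoidReach_module_of_walk hT w y z rfl rfl hw,
    AvoidReach.map (moduleHom G M i)⟩

lemma isSep_expandG_mk_iff {T : Set (Σ j, V j)}
    (hT : setNbhd (expandG G M) (modSet i) ⊆ T) {y z : V i} :
    IsSep (expandG G M) T ⟨i, y⟩ ⟨i, z⟩ ↔ IsSep (M i) (Sigma.mk i ⁻¹' T) y z := by
  simp only [IsSep, avoidReach_expandG_mk_iff hT, Set.mem_preimage]

def liftSep (G : SimpleGraph (Fin k)) (M : ∀ i, SimpleGraph (V i)) (i : Fin k)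
    (T : Set (V i)) : Set (Σ j, V j) :=
  Sigma.mk i '' T ∪ setNbhd (expandG G M) (modSet i)

lemma setNbhd_modSet_subset_liftSep (T : Set (V i)) :
    setNbhd (expandG G M) (modSet i) ⊆ liftSep G M i T :=
  Set.subset_union_right

lemma preimage_liftSep (T : Set (V i)) : Sigma.mk i ⁻¹' liftSep G M i T = T := by
  ext u
  simp [liftSep, mk_notMem_setNbhd_modSet]

lemma liftSep_strictMono : StrictMono (liftSep G M i) :=
  Monotone.strictMono_of_injective (fun _ _ h => Set.union_subset_union_left _ (Set.image_mono h))
    (Function.LeftInverse.injective preimage_liftSep)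

lemma liftSep_preimage_subset {S : Set (Σ j, V j)}
    (hS : setNbhd (expandG G M) (modSet i) ⊆ S) : liftSep G M i (Sigma.mk i ⁻¹' S) ⊆ S :=
  Set.union_subset (Set.image_preimage_subset _ _) hS

lemma liftSep_diff_modSet (T : Set (V i)) :
    liftSep G M i T \ modSet i = setNbhd (expandG G M) (modSet i) := by
  rw [liftSep, Set.union_sdiff_distrib, Set.sdiff_eq_empty.mpr (by rintro _ ⟨_, _, rfl⟩; rfl),
    Set.empty_union, sdiff_eq_left]
  exact Set.disjoint_left.mpr fun _ hN hV => hN.1 hV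

lemma isSep_liftSep_iff {T : Set (V i)} {y z : V i} :
    IsSep (expandG G M) (liftSep G M i T) ⟨i, y⟩ ⟨i, z⟩ ↔ IsSep (M i) T y z := by
  rw [isSep_expandG_mk_iff (setNbhd_modSet_subset_liftSep T), preimage_liftSep]

end Expansion

theorem statement_7_general {k : ℕ} {V : Fin k → Type}
    (G : SimpleGraph (Fin k)) (M : ∀ i, SimpleGraph (V i))
    (S : Set (Σ i, V i)) (i : Fin k) (y z : V i)
    (hS : IsMinSep (expandG G M) S ⟨i, y⟩ ⟨i, z⟩) :
    IsMinimalSeparator (M i) (Sigma.mk i ⁻¹' S) ∧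
      S \ modSet i = setNbhd (expandG G M) (modSet i) := by
  obtain ⟨hsep, hmin⟩ := hS
  have hN := setNbhd_modSet_subset_of_isSep hsep
  have hsepM : IsSep (M i) (Sigma.mk i ⁻¹' S) y z := (isSep_expandG_mk_iff hN).mp hsep
  have hS_eq : liftSep G M i (Sigma.mk i ⁻¹' S) = S := by
    by_contra hne
    exact hmin _ ((liftSep_preimage_subset hN).ssubset_of_ne hne)
      (isSep_liftSep_iff.mpr hsepM)
  refine ⟨⟨y, z, hsepM, fun T hT hTsep => ?_⟩, hS_eq ▸ liftSep_diff_modSet _⟩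
  exact hmin _ (hS_eq ▸ liftSep_strictMono hT) (isSep_liftSep_iff.mpr hTsep)

theorem statement_7 {k : ℕ} {V : Fin k → Type} [∀ i, Fintype (V i)]
    (G : SimpleGraph (Fin k)) (M : ∀ i, SimpleGraph (V i))
    (S : Set (Σ i, V i)) (i : Fin k) (y z : V i)
    (hS : IsMinSep (expandG G M) S ⟨i, y⟩ ⟨i, z⟩) :
    IsMinimalSeparator (M i) (Sigma.mk i ⁻¹' S) ∧
      S \ modSet i = setNbhd (expandG G M) (modSet i) :=
  statement_7_general G M S i y z hS
end

section
/- For all integers p ≥ 1 and q ≥ 1, in the graph W_{p,q} every set obtained by choosing exactly one vertex from each of the p paths is a minimal u,v-separator; consequently W_{p,q} has at least q^p minimal u,v-separators. -/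
open SimpleGraph

universe u

/-- The watermelon graph `W_{p,q}`: `p` pairwise disjoint paths, each on `q` vertices
(vertex `(i, a)` is the `a`-th vertex of the `i`-th path), together with `u = inr 0`
adjacent to the first vertex of every path and `v = inr 1` adjacent to the last vertex
of every path, and no other edges. -/
def watermelon (p q : ℕ) : SimpleGraph (Fin p × Fin q ⊕ Fin 2) :=
  SimpleGraph.fromRel (fun x y =>
    match x, y with
    | Sum.inl (i, a), Sum.inl (j, b) => i = j ∧ (a : ℕ) + 1 = (b : ℕ)
    | Sum.inr s, Sum.inl (_, a) => (s = 0 ∧ (a : ℕ) = 0) ∨ (s = 1 ∧ (a : ℕ) = q - 1)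
    | _, _ => False)

/-!
Walks avoiding the transversal `{(i, f i)}` never leave the `u`-side, made of `u` and the
vertices before `f i` on each path `i`; since `v` is not on it, the transversal separates.
Deleting its vertex on path `i` frees all of path `i`, which then joins `u` to `v`, so the
transversal is minimal. Distinct choices `f` give distinct transversals: `q ^ p` of them.
-/

section AvoidReach

variable {V : Type u} {G : SimpleGraph V} {S T A : Set V} {x y z : V}

lemma AvoidReach.anti (hST : S ⊆ T) (h : AvoidReach G T x y) : AvoidReach G S x y :=
  let ⟨w, hw⟩ := h
  ⟨w, fun z hz hzS => hw z hz (hST hzS)⟩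

lemma AvoidReach.trans_s17 (hxy : AvoidReach G S x y) (hyz : AvoidReach G S y z) :
    AvoidReach G S x z := by
  obtain ⟨w₁, hw₁⟩ := hxy
  obtain ⟨w₂, hw₂⟩ := hyz
  refine ⟨w₁.append w₂, fun v hv => ?_⟩
  rcases (Walk.mem_support_append_iff w₁ w₂).1 hv with hv | hv
  exacts [hw₁ v hv, hw₂ v hv]

lemma AvoidReach.of_adj (hx : x ∉ S) (hy : y ∉ S) (hxy : G.Adj x y) : AvoidReach G S x y :=
  ⟨hxy.toWalk, by simp [hx, hy]⟩

lemma AvoidReach.mem_of_mem (hA : ∀ ⦃x y⦄, x ∈ A → x ∉ S → y ∉ S → G.Adj x y → y ∈ A)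
    (h : AvoidReach G S x y) (hx : x ∈ A) : y ∈ A := by
  obtain ⟨w, hw⟩ := h
  induction w with
  | nil => exact hx
  | @cons a b c hab w ih =>
    exact ih (hA hx (hw a (by simp)) (hw b (by simp)) hab) fun v hv => hw v (by simp [hv])

lemma isMinSep_of_avoidReach_diff_singleton {u v : V} (hS : IsSep G S u v)
    (hreach : ∀ s ∈ S, AvoidReach G (S \ {s}) u v) : IsMinSep G S u v := by
  refine ⟨hS, fun T hTS hT => ?_⟩
  obtain ⟨s, hsS, hsT⟩ := Set.exists_of_ssubset hTS
  exact hT.2.2 ((hreach s hsS).anti (Set.subset_sdiff_singleton hTS.1 hsT))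

end AvoidReach

section Watermelon

variable {p q : ℕ}

@[simp]
lemma watermelon_adj_inl_inl {i j : Fin p} {a b : Fin q} :
    (watermelon p q).Adj (.inl (i, a)) (.inl (j, b)) ↔
      i = j ∧ ((a : ℕ) + 1 = b ∨ (b : ℕ) + 1 = a) := by
  simp only [watermelon, fromRel_adj, ne_eq, Sum.inl.injEq, Prod.mk.injEq]
  constructor
  · rintro ⟨-, ⟨rfl, h⟩ | ⟨rfl, h⟩⟩ <;> simp [h]
  · rintro ⟨rfl, h | h⟩ <;> refine ⟨by omega, by simp [h]⟩

@[simp]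
lemma watermelon_adj_inr_inl {s : Fin 2} {i : Fin p} {a : Fin q} :
    (watermelon p q).Adj (.inr s) (.inl (i, a)) ↔
      (s = 0 ∧ (a : ℕ) = 0) ∨ (s = 1 ∧ (a : ℕ) = q - 1) := by
  simp [watermelon]

@[simp]
lemma watermelon_adj_inl_inr {s : Fin 2} {i : Fin p} {a : Fin q} :
    (watermelon p q).Adj (.inl (i, a)) (.inr s) ↔
      (s = 0 ∧ (a : ℕ) = 0) ∨ (s = 1 ∧ (a : ℕ) = q - 1) := by
  rw [adj_comm, watermelon_adj_inr_inl]

@[simp]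
lemma watermelon_not_adj_inr_inr {s t : Fin 2} : ¬ (watermelon p q).Adj (.inr s) (.inr t) := by
  simp [watermelon]

def pathTransversal (f : Fin p → Fin q) : Set (Fin p × Fin q ⊕ Fin 2) :=
  {x | ∃ i : Fin p, x = .inl (i, f i)}

def uSide (f : Fin p → Fin q) : Set (Fin p × Fin q ⊕ Fin 2) :=
  {x | Sum.elim (fun ia : Fin p × Fin q => ia.2 < f ia.1) (· = 0) x}

lemma uSide_closed (f : Fin p → Fin q) {x y : Fin p × Fin q ⊕ Fin 2} (hx : x ∈ uSide f)
    (hy : y ∉ pathTransversal f) (hxy : (watermelon p q).Adj x y) : y ∈ uSide f := by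
  simp only [uSide, Set.mem_ofPred_eq] at hx ⊢
  rcases x with ⟨i, a⟩ | s <;> rcases y with ⟨j, b⟩ | t
  · obtain ⟨rfl, hab⟩ := watermelon_adj_inl_inl.1 hxy
    have hb : b ≠ f i := fun hb => hy ⟨i, by rw [hb]⟩
    simp only [Sum.elim_inl] at hx ⊢
    omega
  · have : (f i : ℕ) < q := (f i).isLt
    simp only [Sum.elim_inl, Sum.elim_inr, watermelon_adj_inl_inr] at hx hxy ⊢
    omega
  · have hb : b ≠ f j := fun hb => hy ⟨j, by rw [hb]⟩
    simp only [Sum.elim_inl, Sum.elim_inr, watermelon_adj_inr_inl] at hx hxy ⊢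
    rcases hxy with ⟨-, hb0⟩ | ⟨rfl, -⟩
    · omega
    · exact absurd hx (by decide)
  · exact absurd hxy watermelon_not_adj_inr_inr

lemma isSep_pathTransversal (f : Fin p → Fin q) :
    IsSep (watermelon p q) (pathTransversal f) (.inr 0) (.inr 1) := by
  refine ⟨?_, ?_, fun h => ?_⟩
  · rintro ⟨_, ⟨⟩⟩
  · rintro ⟨_, ⟨⟩⟩
  have : Sum.inr 1 ∈ uSide f :=
    h.mem_of_mem (fun _ _ hx _ hy hxy => uSide_closed f hx hy hxy) rfl
  exact (by decide : (1 : Fin 2) ≠ 0) this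

lemma avoidReach_of_path_disjoint {S : Set (Fin p × Fin q ⊕ Fin 2)} (i : Fin p) (hq : 0 < q)
    (hu : .inr 0 ∉ S) (hv : .inr 1 ∉ S) (hpath : ∀ a, .inl (i, a) ∉ S) :
    AvoidReach (watermelon p q) S (.inr 0) (.inr 1) := by
  have hreach : ∀ k (hk : k < q), AvoidReach (watermelon p q) S (.inr 0) (.inl (i, ⟨k, hk⟩)) := by
    intro k
    induction k with
    | zero => exact fun _ => .of_adj hu (hpath _) (by simp)
    | succ k ih => exact fun hk => (ih (by omega)).trans_s17 (.of_adj (hpath _) (hpath _) (by simp))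
  exact (hreach (q - 1) (by omega)).trans_s17 (.of_adj (hpath _) hv (by simp))

lemma isMinSep_pathTransversal (f : Fin p → Fin q) :
    IsMinSep (watermelon p q) (pathTransversal f) (.inr 0) (.inr 1) := by
  refine isMinSep_of_avoidReach_diff_singleton (isSep_pathTransversal f) ?_
  rintro _ ⟨i, rfl⟩
  refine avoidReach_of_path_disjoint i (f i).pos (fun h => nomatch h.1) (fun h => nomatch h.1) ?_
  rintro a ⟨⟨j, hj⟩, ha⟩
  simp only [Sum.inl.injEq, Prod.mk.injEq] at hj
  obtain ⟨rfl, rfl⟩ := hj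
  exact ha rfl

lemma pathTransversal_injective : Function.Injective (pathTransversal (p := p) (q := q)) := by
  intro f g h
  funext i
  obtain ⟨j, hj⟩ : Sum.inl (i, f i) ∈ pathTransversal g := h ▸ ⟨i, rfl⟩
  obtain ⟨rfl, hfg⟩ := Prod.ext_iff.1 (Sum.inl_injective hj)
  exact hfg

end Watermelon

theorem statement_17_general (p q : ℕ) :
    (∀ f : Fin p → Fin q,
      IsMinSep (watermelon p q) {x | ∃ i : Fin p, x = Sum.inl (i, f i)}
        (Sum.inr 0) (Sum.inr 1)) ∧
    q ^ p ≤ {S : Set (Fin p × Fin q ⊕ Fin 2) |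
        IsMinSep (watermelon p q) S (Sum.inr 0) (Sum.inr 1)}.ncard := by
  refine ⟨isMinSep_pathTransversal, ?_⟩
  calc q ^ p = (Set.range (pathTransversal (p := p) (q := q))).ncard := by
        rw [← Nat.card_coe_set_eq, Nat.card_range_of_injective pathTransversal_injective]
        simp
    _ ≤ _ := Set.ncard_le_ncard (by rintro _ ⟨f, rfl⟩; exact isMinSep_pathTransversal f)
      (Set.toFinite _)

theorem statement_17 (p q : ℕ) (hp : 1 ≤ p) (hq : 1 ≤ q) :
    (∀ f : Fin p → Fin q,
      IsMinSep (watermelon p q) {x | ∃ i : Fin p, x = Sum.inl (i, f i)}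
        (Sum.inr 0) (Sum.inr 1)) ∧
    q ^ p ≤ {S : Set (Fin p × Fin q ⊕ Fin 2) |
        IsMinSep (watermelon p q) S (Sum.inr 0) (Sum.inr 1)}.ncard :=
  statement_17_general p q
end
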